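/- arXiv:math/0609011 — 2 statements merged into one kernel-verified Lean document; each statement's English description precedes it below -/
import Mathlib

section
/- If N(ω) is a random isolating block for the random homeomorphism φ and ψ is a random homeomorphism with sup_{x∈N(θ_{−1}ω)} d(φ(θ_{−1}ω,x), ψ(θ_{−1}ω,x)) + sup_{y∈N(θω)} d(φ⁻¹(θω,y), ψ⁻¹(θω,y)) sufficiently small for each ω, then N(ω) is also a random isolating block for ψ. -/
/-!
On the compact set `N ω \ int N ω` the continuous function
`z ↦ d(z, φ(θ⁻¹ω)(N(θ⁻¹ω))) + d(φ(ω, z), N(θω))` is positive, because a zero of it would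
violate the block condition for `φ`; so it is bounded below by some `e(ω) > 0`.
If `z` lies in the `ψ`-intersection, then `z = ψ(θ⁻¹ω, x)` with `x ∈ N(θ⁻¹ω)` and
`ψ(ω, z) ∈ N(θω)`, so the two distances are at most the sup-distance of `φ` and `ψ` on
`N(θ⁻¹ω)` and on `N(ω)`. The latter is controlled by the smallness condition at `θω`, which is
why `ε(ω) = min(e(ω), e(θ⁻¹ω)) / 2` works.
-/

open Metric Set

theorem exists_pos_le_infDist_add_infDist_comp {X Y : Type*} [PseudoMetricSpace X]
    [PseudoMetricSpace Y] {K A : Set X} {B : Set Y} {f : X → Y} (hK : IsCompact K)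
    (hA : IsClosed A) (hB : IsClosed B) (hf : Continuous f) (hKAB : ∀ z ∈ K ∩ A, f z ∉ B) :
    ∃ e > 0, A.Nonempty → B.Nonempty → ∀ z ∈ K, e ≤ infDist z A + infDist (f z) B := by
  by_cases hne : A.Nonempty ∧ B.Nonempty
  · have hpos : ∀ z ∈ K, 0 < infDist z A + infDist (f z) B := by
      intro z hz
      by_cases hzA : z ∈ A
      · exact add_pos_of_nonneg_of_pos infDist_nonneg
          ((hB.notMem_iff_infDist_pos hne.2).1 (hKAB z ⟨hz, hzA⟩))
      · exact add_pos_of_pos_of_nonneg ((hA.notMem_iff_infDist_pos hne.1).1 hzA) infDist_nonneg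
    have hcont : Continuous fun z => infDist z A + infDist (f z) B :=
      (continuous_infDist_pt A).add ((continuous_infDist_pt B).comp hf)
    obtain ⟨e, he, hle⟩ := hK.exists_forall_le' hcont.continuousOn hpos
    exact ⟨e, he, fun _ _ => hle⟩
  · exact ⟨1, one_pos, fun hA hB => (hne ⟨hA, hB⟩).elim⟩

section SupDist

variable {α X : Type*} [PseudoMetricSpace X] {s : Set α} {f g : α → X} {x : α}

theorem sSup_image_dist_nonneg (f g : α → X) (s : Set α) :
    0 ≤ sSup ((fun x => dist (f x) (g x)) '' s) :=
  Real.sSup_nonneg (by rintro _ ⟨_, _, rfl⟩; exact dist_nonneg)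

theorem infDist_image_le_sSup_dist (hbdd : BddAbove ((fun x => dist (f x) (g x)) '' s))
    (hx : x ∈ s) : infDist (g x) (f '' s) ≤ sSup ((fun x => dist (f x) (g x)) '' s) :=
  calc infDist (g x) (f '' s) ≤ dist (g x) (f x) := infDist_le_dist_of_mem (mem_image_of_mem f hx)
    _ = dist (f x) (g x) := dist_comm _ _
    _ ≤ _ := le_csSup hbdd (mem_image_of_mem _ hx)

theorem infDist_le_sSup_dist_of_mem {t : Set X}
    (hbdd : BddAbove ((fun x => dist (f x) (g x)) '' s)) (hx : x ∈ s) (hgx : g x ∈ t) :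
    infDist (f x) t ≤ sSup ((fun x => dist (f x) (g x)) '' s) :=
  (infDist_le_dist_of_mem hgx).trans (le_csSup hbdd (mem_image_of_mem _ hx))

end SupDist

theorem isolating_block_robust_general
    {Ω X : Type*} [MetricSpace X]
    (θ : Ω → Ω) (θinv : Ω → Ω)
    (hθ : ∀ ω, θinv (θ ω) = ω ∧ θ (θinv ω) = ω)
    (φ : Ω → X → X) (φinv : Ω → X → X)
    (hφcont : ∀ ω, Continuous (φ ω))
    (hφ : ∀ ω, Function.LeftInverse (φinv ω) (φ ω) ∧
      Function.RightInverse (φinv ω) (φ ω))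
    (N : Ω → Set X) (hN : ∀ ω, IsCompact (N ω))
    (hblock : ∀ ω,
      φ (θinv ω) '' N (θinv ω) ∩ N ω ∩ φinv ω '' N (θ ω) ⊆ interior (N ω)) :
    ∃ ε : Ω → ℝ, (∀ ω, 0 < ε ω) ∧
      ∀ (ψ : Ω → X → X) (ψinv : Ω → X → X),
        (∀ ω, Continuous (ψ ω)) →
        (∀ ω, Function.LeftInverse (ψinv ω) (ψ ω) ∧
          Function.RightInverse (ψinv ω) (ψ ω)) →
        (∀ ω,
          sSup ((fun x => dist (φ (θinv ω) x) (ψ (θinv ω) x)) '' N (θinv ω)) +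
          sSup ((fun y => dist (φinv ω y) (ψinv ω y)) '' N (θ ω)) < ε ω) →
        ∀ ω, ψ (θinv ω) '' N (θinv ω) ∩ N ω ∩ ψinv ω '' N (θ ω)
          ⊆ interior (N ω) := by
  have hexit : ∀ ω, ∀ z ∈ (N ω \ interior (N ω)) ∩ φ (θinv ω) '' N (θinv ω),
      φ ω z ∉ N (θ ω) := by
    rintro ω z ⟨⟨hzN, hzint⟩, hzφ⟩ hφz
    exact hzint (hblock ω ⟨⟨hzφ, hzN⟩, φ ω z, hφz, (hφ ω).1 z⟩)
  choose e he_pos he using fun ω => exists_pos_le_infDist_add_infDist_comp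
    ((hN ω).diff isOpen_interior) ((hN (θinv ω)).image (hφcont _)).isClosed
    (hN (θ ω)).isClosed (hφcont ω) (hexit ω)
  refine ⟨fun ω => min (e ω) (e (θinv ω)) / 2,
    fun ω => half_pos (lt_min (he_pos ω) (he_pos (θinv ω))), ?_⟩
  rintro ψ ψinv hψcont hψ hsmall ω z ⟨⟨⟨x, hx, rfl⟩, hzN⟩, y, hy, hyz⟩
  by_contra hzint
  have hbdd : ∀ ω', BddAbove ((fun x => dist (φ ω' x) (ψ ω' x)) '' N ω') := fun ω' =>
    ((hN ω').image ((hφcont ω').dist (hψcont ω'))).bddAbove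
  have hψz : ψ ω (ψ (θinv ω) x) ∈ N (θ ω) := by rw [← hyz, (hψ ω).2 y]; exact hy
  have h₁ := infDist_image_le_sSup_dist (hbdd (θinv ω)) hx
  have h₂ := infDist_le_sSup_dist_of_mem (hbdd ω) hzN hψz
  have hgap := he ω ⟨_, mem_image_of_mem _ hx⟩ ⟨y, hy⟩ _ ⟨hzN, hzint⟩
  have hsmall_ω := hsmall ω
  have hsmall_θ := hsmall (θ ω)
  dsimp only at hsmall_ω hsmall_θ
  rw [(hθ ω).1] at hsmall_θ
  linarith [min_le_left (e ω) (e (θinv ω)), min_le_right (e (θ ω)) (e ω),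
    sSup_image_dist_nonneg (φinv ω) (ψinv ω) (N (θ ω)),
    sSup_image_dist_nonneg (φinv (θ ω)) (ψinv (θ ω)) (N (θ (θ ω)))]

/-- Robustness of random isolating blocks under small random `C⁰`
perturbations: if `N` is a random isolating block for `φ`, then there is
`ε(ω) > 0` such that every random homeomorphism `ψ` with
`sup_{x ∈ N(θ₋₁ω)} d(φ(θ₋₁ω,x), ψ(θ₋₁ω,x)) +
 sup_{y ∈ N(θω)} d(φ⁻¹(θω,y), ψ⁻¹(θω,y)) < ε(ω)` for each `ω`
also admits `N` as a random isolating block. -/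
theorem isolating_block_robust
    {Ω X : Type*} [MetricSpace X] [LocallyCompactSpace X]
    (θ : Ω → Ω) (θinv : Ω → Ω)
    (hθ : ∀ ω, θinv (θ ω) = ω ∧ θ (θinv ω) = ω)
    (φ : Ω → X → X) (φinv : Ω → X → X)
    (hφcont : ∀ ω, Continuous (φ ω))
    (hφ : ∀ ω, Function.LeftInverse (φinv ω) (φ ω) ∧
      Function.RightInverse (φinv ω) (φ ω))
    (N : Ω → Set X) (hN : ∀ ω, IsCompact (N ω))
    (hblock : ∀ ω,
      φ (θinv ω) '' N (θinv ω) ∩ N ω ∩ φinv ω '' N (θ ω) ⊆ interior (N ω)) :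
    ∃ ε : Ω → ℝ, (∀ ω, 0 < ε ω) ∧
      ∀ (ψ : Ω → X → X) (ψinv : Ω → X → X),
        (∀ ω, Continuous (ψ ω)) →
        (∀ ω, Function.LeftInverse (ψinv ω) (ψ ω) ∧
          Function.RightInverse (ψinv ω) (ψ ω)) →
        (∀ ω,
          sSup ((fun x => dist (φ (θinv ω) x) (ψ (θinv ω) x)) '' N (θinv ω)) +
          sSup ((fun y => dist (φinv ω y) (ψinv ω y)) '' N (θ ω)) < ε ω) →
        ∀ ω, ψ (θinv ω) '' N (θinv ω) ∩ N ω ∩ ψinv ω '' N (θ ω)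
          ⊆ interior (N ω) :=
  isolating_block_robust_general θ θinv hθ φ φinv hφcont hφ N hN hblock
end

section
/- The random pointed space map φ_P associated with a filtration pair is continuous: if P = (N,L) is a filtration pair (in particular φ(ω,L(ω)) ∩ cl(N(θω)\L(θω)) = ∅), then the induced map φ_P(ω,·) : N(ω)/L(ω) → N(θω)/L(θω), sending [L(ω)] ↦ [L(θω)], x ↦ [L(θω)] if φ(ω,x) ∉ N(θω), and x ↦ p(θω, φ(ω,x)) otherwise, is continuous and preserves the base point; moreover the base point [L(ω)] lies in the interior of φ_P(ω,·)⁻¹([L(θω)]). -/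
/-! Pulled back to `N`, the map `φ_P ∘ p` is `p' ∘ φ` on the open set where `φ` lands in
`interior N'`, and is the base point on the open set where `φ` avoids `closure (N' \ L')`.
The filtration-pair condition puts `L` inside the second set, and `L` is a neighbourhood in `N`
of every point outside the first, so `φ_P ∘ p` is continuous and `φ_P` is continuous by the
universal property of the quotient. The second set contains `L`, hence is saturated, and its image
is an open neighbourhood of the base point sent to the base point. -/

/-- The setoid on `N` (as a subtype) collapsing the subset `L` to a point. -/
def collapseSetoid {X : Type*} (N L : Set X) : Setoid ↥N where
  r x y := x = y ∨ ((x : X) ∈ L ∧ (y : X) ∈ L)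
  iseqv := by
    constructor
    · intro x; exact Or.inl rfl
    · rintro x y (rfl | ⟨hx, hy⟩)
      · exact Or.inl rfl
      · exact Or.inr ⟨hy, hx⟩
    · rintro x y z (rfl | ⟨hx, hy⟩) (rfl | ⟨hy', hz⟩)
      · exact Or.inl rfl
      · exact Or.inr ⟨hy', hz⟩
      · exact Or.inr ⟨hx, hy⟩
      · exact Or.inr ⟨hx, hz⟩

/-- The pointed quotient space `N/L` with the quotient topology. -/
def pointedQuotient {X : Type*} [TopologicalSpace X] (N L : Set X) : Type _ :=
  Quotient (collapseSetoid N L)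

instance {X : Type*} [TopologicalSpace X] (N L : Set X) :
    TopologicalSpace (pointedQuotient N L) :=
  instTopologicalSpaceQuotient

open Topology Filter Set

namespace pointedQuotient

variable {X Y : Type*}

theorem mk_eq_mk_of_mem {N L : Set X} {x y : N} (hx : (x : X) ∈ L) (hy : (y : X) ∈ L) :
    Quotient.mk (collapseSetoid N L) x = Quotient.mk (collapseSetoid N L) y :=
  Quotient.sound (Or.inr ⟨hx, hy⟩)

open Classical in
/-- The quotient map `p` of the paper, extended by the base point `b` outside `N'`. -/
noncomputable def collapse (N' L' : Set Y) (b : Quotient (collapseSetoid N' L')) (y : Y) :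
    Quotient (collapseSetoid N' L') :=
  if h : y ∈ N' then Quotient.mk (collapseSetoid N' L') ⟨y, h⟩ else b

variable {N' L' : Set Y} {b : Quotient (collapseSetoid N' L')}

theorem collapse_of_mem {y : Y} (h : y ∈ N') :
    collapse N' L' b y = Quotient.mk (collapseSetoid N' L') ⟨y, h⟩ :=
  dif_pos h

theorem collapse_of_notMem {y : Y} (h : y ∉ N') : collapse N' L' b y = b :=
  dif_neg h

theorem collapse_eq_mk_of_notMem_diff {l' : N'} (hl' : (l' : Y) ∈ L') {y : Y}
    (hy : y ∉ N' \ L') :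
    collapse N' L' (Quotient.mk (collapseSetoid N' L') l') y =
      Quotient.mk (collapseSetoid N' L') l' := by
  by_cases hN' : y ∈ N'
  · rw [collapse_of_mem hN']
    exact mk_eq_mk_of_mem (not_not.1 fun hL' => hy ⟨hN', hL'⟩) hl'
  · exact collapse_of_notMem hN'

variable [TopologicalSpace X] [TopologicalSpace Y]

/-- Sets containing `L` are saturated for the collapse. -/
theorem isOpen_mk_image {N L : Set X} {U : Set N} (hU : IsOpen U)
    (hLU : ∀ x : N, (x : X) ∈ L → x ∈ U) :
    IsOpen (Quotient.mk (collapseSetoid N L) '' U) := by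
  rw [← isQuotientMap_quotient_mk'.isOpen_preimage]
  convert hU using 1
  refine Subset.antisymm ?_ (subset_preimage_image _ U)
  rintro x ⟨y, hyU, hyx⟩
  rcases Quotient.exact hyx with rfl | ⟨-, hxL⟩
  exacts [hyU, hLU x hxL]

theorem continuousAt_collapse {y : Y} (hy : y ∈ interior N') :
    ContinuousAt (collapse N' L' b) y := by
  have hcont : ContinuousOn (collapse N' L' b) N' := by
    rw [continuousOn_iff_continuous_domRestrict]
    convert (continuous_quotient_mk' : Continuous (Quotient.mk (collapseSetoid N' L'))) using 1
    funext y
    exact collapse_of_mem y.2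
  exact hcont.continuousAt (mem_interior_iff_mem_nhds.1 hy)

variable {f : X → Y} {N L : Set X} {l' : N'}

theorem continuousOn_collapse_comp (hf : Continuous f) (hl' : (l' : Y) ∈ L')
    (hfp : Disjoint (f '' L) (closure (N' \ L')))
    (hLnbhd : ∀ x ∈ N, f x ∉ interior N' → L ∈ 𝓝[N] x) :
    ContinuousOn (collapse N' L' (Quotient.mk (collapseSetoid N' L') l') ∘ f) N := by
  intro x hx
  by_cases hfx : f x ∈ interior N'
  · exact ((continuousAt_collapse hfx).comp hf.continuousAt).continuousWithinAt
  · have hbase : ∀ z ∈ L, (collapse N' L' (Quotient.mk (collapseSetoid N' L') l') ∘ f) z =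
        Quotient.mk (collapseSetoid N' L') l' := fun z hz =>
      collapse_eq_mk_of_notMem_diff hl' fun hdiff =>
        disjoint_left.1 hfp (mem_image_of_mem f hz) (subset_closure hdiff)
    have hL := hLnbhd x hx hfx
    exact continuousWithinAt_const.congr_of_eventuallyEq (eventually_of_mem hL hbase)
      (hbase x (mem_of_mem_nhdsWithin hx hL))

theorem mk_mem_interior_preimage_mk (hf : Continuous f) (hl' : (l' : Y) ∈ L')
    (hfp : Disjoint (f '' L) (closure (N' \ L')))
    {g : pointedQuotient N L → pointedQuotient N' L'}
    (hg : g ∘ Quotient.mk (collapseSetoid N L) =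
      N.domRestrict (collapse N' L' (Quotient.mk (collapseSetoid N' L') l') ∘ f))
    {x : N} (hx : (x : X) ∈ L) :
    Quotient.mk (collapseSetoid N L) x ∈
      interior (g ⁻¹' {Quotient.mk (collapseSetoid N' L') l'}) := by
  set U : Set N := {z | f z ∉ closure (N' \ L')}
  have hU : IsOpen U := isClosed_closure.isOpen_compl.preimage (hf.comp continuous_subtype_val)
  have hLU : ∀ z : N, (z : X) ∈ L → z ∈ U := fun z hz =>
    disjoint_left.1 hfp (mem_image_of_mem f hz)
  refine mem_interior.2 ⟨_, ?_, isOpen_mk_image hU hLU, mem_image_of_mem _ (hLU x hx)⟩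
  rintro _ ⟨z, hz, rfl⟩
  exact (congrFun hg z).trans
    (collapse_eq_mk_of_notMem_diff hl' fun hdiff => hz (subset_closure hdiff))

end pointedQuotient

open pointedQuotient

theorem pointed_space_map_continuous_general
    {Ω X : Type*} [TopologicalSpace X]
    (θ : Ω → Ω) (φ : Ω → X → X)
    (hφcont : ∀ ω, Continuous (φ ω))
    (N : Ω → Set X)
    (L : Ω → Set X)
    (hLN : ∀ ω, L ω ⊆ N ω)
    -- the key filtration-pair condition
    (hfp : ∀ ω, φ ω '' L ω ∩ closure (N (θ ω) \ L (θ ω)) = ∅)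
    -- `L` is a neighborhood of the exit set in `N`
    (hLnbhd : ∀ ω, ∀ x ∈ {x ∈ N ω | φ ω x ∉ interior (N (θ ω))},
      L ω ∈ nhdsWithin x (N ω))
    -- a choice of base point of the collapsed set
    (l : ∀ ω, X) (hl : ∀ ω, l ω ∈ L ω)
    -- the random pointed space map `φ_P`
    (φP : ∀ ω, pointedQuotient (N ω) (L ω) → pointedQuotient (N (θ ω)) (L (θ ω)))
    (hφP₁ : ∀ ω (x : X) (hx : x ∈ N ω) (h : φ ω x ∈ N (θ ω)),
      φP ω (Quotient.mk (collapseSetoid (N ω) (L ω)) ⟨x, hx⟩)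
        = Quotient.mk (collapseSetoid (N (θ ω)) (L (θ ω))) ⟨φ ω x, h⟩)
    (hφP₂ : ∀ ω (x : X) (hx : x ∈ N ω), φ ω x ∉ N (θ ω) →
      φP ω (Quotient.mk (collapseSetoid (N ω) (L ω)) ⟨x, hx⟩)
        = Quotient.mk (collapseSetoid (N (θ ω)) (L (θ ω)))
            ⟨l (θ ω), hLN (θ ω) (hl (θ ω))⟩) :
    ∀ ω, Continuous (φP ω) ∧
      φP ω (Quotient.mk (collapseSetoid (N ω) (L ω)) ⟨l ω, hLN ω (hl ω)⟩)
        = Quotient.mk (collapseSetoid (N (θ ω)) (L (θ ω)))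
            ⟨l (θ ω), hLN (θ ω) (hl (θ ω))⟩ ∧
      Quotient.mk (collapseSetoid (N ω) (L ω)) ⟨l ω, hLN ω (hl ω)⟩
        ∈ interior ((φP ω) ⁻¹'
            {Quotient.mk (collapseSetoid (N (θ ω)) (L (θ ω)))
              ⟨l (θ ω), hLN (θ ω) (hl (θ ω))⟩}) := by
  intro ω
  set l' : N (θ ω) := ⟨l (θ ω), hLN (θ ω) (hl (θ ω))⟩
  have hdisj := disjoint_iff_inter_eq_empty.2 (hfp ω)
  have hcomp : φP ω ∘ Quotient.mk (collapseSetoid (N ω) (L ω)) =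
      (N ω).domRestrict (collapse (N (θ ω)) (L (θ ω)) (Quotient.mk _ l') ∘ φ ω) := by
    funext ⟨x, hx⟩
    by_cases h : φ ω x ∈ N (θ ω)
    · exact (hφP₁ ω x hx h).trans (collapse_of_mem h).symm
    · exact (hφP₂ ω x hx h).trans (collapse_of_notMem h).symm
  have hcont := continuousOn_collapse_comp (l' := l') (hφcont ω) (hl (θ ω)) hdisj
    fun x hx hxout => hLnbhd ω x ⟨hx, hxout⟩
  have hbase := mk_mem_interior_preimage_mk (hφcont ω) (hl (θ ω)) hdisj hcomp
    (x := ⟨l ω, hLN ω (hl ω)⟩) (hl ω)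
  exact ⟨isQuotientMap_quot_mk.continuous_iff.2 (hcomp ▸ hcont.domRestrict),
    interior_subset (s := φP ω ⁻¹' _) hbase, hbase⟩

/-- For a random filtration pair `P = (N,L)` (in particular
`φ(ω,L(ω)) ∩ cl(N(θω)\L(θω)) = ∅`), the induced random pointed space map
`φ_P(ω,·) : N(ω)/L(ω) → N(θω)/L(θω)` (sending the base point to the base
point, `x ↦ [L(θω)]` when `φ(ω,x) ∉ N(θω)`, and `x ↦ [φ(ω,x)]` otherwise) is
continuous, preserves the base point, and the base point lies in the interior
of `φ_P(ω,·)⁻¹([L(θω)])`. -/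
theorem pointed_space_map_continuous
    {Ω X : Type*} [TopologicalSpace X]
    (θ : Ω → Ω) (φ : Ω → X → X)
    (hφcont : ∀ ω, Continuous (φ ω))
    (hφhomeo : ∀ ω, IsHomeomorph (φ ω))
    (N : Ω → Set X) (hN : ∀ ω, IsCompact (N ω))
    (L : Ω → Set X) (hL : ∀ ω, IsCompact (L ω))
    (hLN : ∀ ω, L ω ⊆ N ω)
    -- the key filtration-pair condition
    (hfp : ∀ ω, φ ω '' L ω ∩ closure (N (θ ω) \ L (θ ω)) = ∅)
    -- `L` is a neighborhood of the exit set in `N`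
    (hLnbhd : ∀ ω, ∀ x ∈ {x ∈ N ω | φ ω x ∉ interior (N (θ ω))},
      L ω ∈ nhdsWithin x (N ω))
    -- a choice of base point of the collapsed set
    (l : ∀ ω, X) (hl : ∀ ω, l ω ∈ L ω)
    -- the random pointed space map `φ_P`
    (φP : ∀ ω, pointedQuotient (N ω) (L ω) → pointedQuotient (N (θ ω)) (L (θ ω)))
    (hφP₁ : ∀ ω (x : X) (hx : x ∈ N ω) (h : φ ω x ∈ N (θ ω)),
      φP ω (Quotient.mk (collapseSetoid (N ω) (L ω)) ⟨x, hx⟩)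
        = Quotient.mk (collapseSetoid (N (θ ω)) (L (θ ω))) ⟨φ ω x, h⟩)
    (hφP₂ : ∀ ω (x : X) (hx : x ∈ N ω), φ ω x ∉ N (θ ω) →
      φP ω (Quotient.mk (collapseSetoid (N ω) (L ω)) ⟨x, hx⟩)
        = Quotient.mk (collapseSetoid (N (θ ω)) (L (θ ω)))
            ⟨l (θ ω), hLN (θ ω) (hl (θ ω))⟩) :
    ∀ ω, Continuous (φP ω) ∧
      φP ω (Quotient.mk (collapseSetoid (N ω) (L ω)) ⟨l ω, hLN ω (hl ω)⟩)
        = Quotient.mk (collapseSetoid (N (θ ω)) (L (θ ω)))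
            ⟨l (θ ω), hLN (θ ω) (hl (θ ω))⟩ ∧
      Quotient.mk (collapseSetoid (N ω) (L ω)) ⟨l ω, hLN ω (hl ω)⟩
        ∈ interior ((φP ω) ⁻¹'
            {Quotient.mk (collapseSetoid (N (θ ω)) (L (θ ω)))
              ⟨l (θ ω), hLN (θ ω) (hl (θ ω))⟩}) :=
  pointed_space_map_continuous_general θ φ hφcont N L hLN hfp hLnbhd l hl φP hφP₁ hφP₂
end
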